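/- arXiv:2504.15706 — 4 statements merged into one kernel-verified Lean document; each statement's English description precedes it below -/
import Mathlib

section
/- Let (a_n)_{n≥1} be the sequence of natural numbers defined by a_1 = 3 and a_{n+1} = 2a_n + ⌈a_n/2⌉ (the recursion satisfied by the chromatic numbers χ(C_{2k+1}^n) of OR powers of odd cycles with k ≥ 2). Then for all n ≥ 1, 3·(5/2)^{n−1} ≤ a_n ≤ (10·(5/2)^{n−1} − 1)/3, and consequently the multiplicative gain η_n = 3^n / a_n of the recursive coloring over the greedy coloring (which uses (χ(C_{2k+1}))^n = 3^n colors) satisfies η_n ≥ (9/10)·(6/5)^{n−1} and tends to infinity as n → ∞. -/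
/-!
Since `2m + ⌈m/2⌉` lies between `5m/2` and `(5m + 1)/2`, the sequence grows at least like
`(5/2)^n` and `a_n + 1/3` grows at most like `(5/2)^n`; comparing with `3^n` gives the
geometric gain `(6/5)^n`.
-/

open Filter

lemma five_halves_mul_le_cast_two_mul_add_half (m : ℕ) :
    (5 / 2 : ℝ) * m ≤ ((2 * m + (m + 1) / 2 : ℕ) : ℝ) := by
  have h : (m : ℝ) ≤ 2 * (((m + 1) / 2 : ℕ) : ℝ) :=
    mod_cast (by omega : m ≤ 2 * ((m + 1) / 2))
  push_cast
  linarith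

lemma cast_two_mul_add_half_le (m : ℕ) :
    ((2 * m + (m + 1) / 2 : ℕ) : ℝ) ≤ (5 * m + 1) / 2 := by
  have h : 2 * (((m + 1) / 2 : ℕ) : ℝ) ≤ m + 1 :=
    mod_cast (by omega : 2 * ((m + 1) / 2) ≤ m + 1)
  push_cast
  linarith

lemma nine_tenths_mul_le_three_pow_div {x : ℝ} (k : ℕ) (hx : 0 < x)
    (hle : x ≤ (10 * (5 / 2 : ℝ) ^ k - 1) / 3) :
    (9 / 10 : ℝ) * (6 / 5) ^ k ≤ 3 ^ (k + 1) / x := by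
  calc (9 / 10 : ℝ) * (6 / 5) ^ k = 3 ^ (k + 1) / (10 / 3 * (5 / 2) ^ k) := by
        rw [div_pow, div_pow, pow_succ]
        field_simp
        rw [show (6 : ℝ) = 3 * 2 by norm_num, mul_pow]
        ring
    _ ≤ 3 ^ (k + 1) / x := by gcongr; linarith

section OrPowerRecursion

variable {a : ℕ → ℕ} (hrec : ∀ n, 1 ≤ n → a (n + 1) = 2 * a n + (a n + 1) / 2)
include hrec

lemma geom_le_of_orPowerRecursion (k : ℕ) : (5 / 2 : ℝ) ^ k * a 1 ≤ a (k + 1) :=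
  geom_le (u := fun k ↦ (a (k + 1) : ℝ)) (by norm_num) k fun j _ ↦ by
    simpa only [hrec (j + 1) (Nat.le_add_left 1 j)]
      using five_halves_mul_le_cast_two_mul_add_half (a (j + 1))

lemma add_third_le_geom_of_orPowerRecursion (k : ℕ) :
    (a (k + 1) : ℝ) + 1 / 3 ≤ (5 / 2 : ℝ) ^ k * (a 1 + 1 / 3) :=
  le_geom (u := fun k ↦ (a (k + 1) : ℝ) + 1 / 3) (by norm_num) k fun j _ ↦ by
    have := cast_two_mul_add_half_le (a (j + 1))
    rw [← hrec (j + 1) (Nat.le_add_left 1 j)] at this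
    linarith

end OrPowerRecursion

/-- For the sequence `a 1 = 3`, `a (n+1) = 2·a n + ⌈a n / 2⌉` (the recursion of the
chromatic numbers of OR powers of odd cycles; in `ℕ`, `⌈m/2⌉ = (m+1)/2`), one has
`3·(5/2)^{n−1} ≤ a n ≤ (10·(5/2)^{n−1} − 1)/3` for `n ≥ 1`; consequently the gain
`η_n = 3^n / a n` over greedy coloring satisfies `η_n ≥ (9/10)·(6/5)^{n−1}` and tends
to infinity. -/
theorem odd_cycle_coloring_gain (a : ℕ → ℕ) (h1 : a 1 = 3)
    (hrec : ∀ n, 1 ≤ n → a (n + 1) = 2 * a n + (a n + 1) / 2) :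
    (∀ n, 1 ≤ n → 3 * ((5 : ℝ) / 2) ^ (n - 1) ≤ (a n : ℝ) ∧
      (a n : ℝ) ≤ (10 * ((5 : ℝ) / 2) ^ (n - 1) - 1) / 3) ∧
    (∀ n, 1 ≤ n → (9 / 10 : ℝ) * ((6 : ℝ) / 5) ^ (n - 1) ≤ (3 : ℝ) ^ n / (a n : ℝ)) ∧
    Filter.Tendsto (fun n : ℕ => (3 : ℝ) ^ n / (a n : ℝ)) Filter.atTop Filter.atTop := by
  have bounds : ∀ n, 1 ≤ n → 3 * ((5 : ℝ) / 2) ^ (n - 1) ≤ (a n : ℝ) ∧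
      (a n : ℝ) ≤ (10 * ((5 : ℝ) / 2) ^ (n - 1) - 1) / 3 := by
    intro n hn
    obtain ⟨k, rfl⟩ := Nat.exists_eq_add_of_le' hn
    have lower := geom_le_of_orPowerRecursion hrec k
    have upper := add_third_le_geom_of_orPowerRecursion hrec k
    rw [h1, Nat.cast_ofNat] at lower upper
    rw [Nat.add_sub_cancel]
    constructor <;> linarith
  have gain : ∀ n, 1 ≤ n →
      (9 / 10 : ℝ) * ((6 : ℝ) / 5) ^ (n - 1) ≤ (3 : ℝ) ^ n / (a n : ℝ) := by
    intro n hn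
    obtain ⟨lower, upper⟩ := bounds n hn
    obtain ⟨k, rfl⟩ := Nat.exists_eq_add_of_le' hn
    rw [Nat.add_sub_cancel] at lower upper ⊢
    exact nine_tenths_mul_le_three_pow_div k (lt_of_lt_of_le (by positivity) lower) upper
  have growth : Tendsto (fun n : ℕ ↦ (9 / 10 : ℝ) * (6 / 5) ^ (n - 1)) atTop atTop :=
    ((tendsto_pow_atTop_atTop_of_one_lt (by norm_num)).comp
      (tendsto_sub_atTop_nat 1)).const_mul_atTop (by norm_num)
  refine ⟨bounds, gain, tendsto_atTop_mono' atTop ?_ growth⟩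
  filter_upwards [eventually_ge_atTop 1] with n hn using gain n hn
end

section
/- Let k ≥ 2 and n ≥ 1 be integers, and let α_0, α_1, …, α_n be natural numbers satisfying α_0 = 1, α_t ≥ k·α_{t−1} for all 1 ≤ t ≤ n, and Σ_{t=0}^{n} α_t · k^t = (2k+1)^n. Then α_n ≥ (2k+1)^n · k^n · (k^2 − 1) / (k^{2(n+1)} − 1). -/
/-!
Iterating the growth condition gives `k ^ (n - t) * α_t ≤ α_n`, hence
`k ^ n * α_t * k ^ t ≤ α_n * k ^ (2 t)`. Summing over `t` and using the total-probability
constraint bounds `k ^ n (2k+1) ^ n` by `α_n` times the geometric sum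
`∑_{t ≤ n} k ^ (2 t) = (k ^ (2(n+1)) - 1) / (k ^ 2 - 1)`.
-/

open Finset

section OrderedSemiring

variable {R : Type*} [CommSemiring R] [PartialOrder R] [IsOrderedRing R]

theorem pow_sub_mul_le_of_mul_le_succ {x : R} (hx : 0 ≤ x) {b : ℕ → R} {n : ℕ}
    (hstep : ∀ t, 1 ≤ t → t ≤ n → x * b (t - 1) ≤ b t) {t : ℕ} (ht : t ≤ n) :
    x ^ (n - t) * b t ≤ b n := by
  induction ht using Nat.decreasingInduction with
  | self => simp
  | of_succ t htn ih =>
    calc x ^ (n - t) * b t = x ^ (n - (t + 1)) * (x * b t) := by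
          rw [← mul_assoc, ← pow_succ, Nat.sub_add_eq, Nat.sub_add_cancel (by omega)]
      _ ≤ x ^ (n - (t + 1)) * b (t + 1) :=
          mul_le_mul_of_nonneg_left (hstep (t + 1) (by omega) htn) (pow_nonneg hx _)
      _ ≤ b n := ih

theorem pow_mul_sum_mul_pow_le {x : R} (hx : 0 ≤ x) {b : ℕ → R} {n : ℕ}
    (hdom : ∀ t ≤ n, x ^ (n - t) * b t ≤ b n) :
    x ^ n * ∑ t ∈ range (n + 1), b t * x ^ t ≤ b n * ∑ t ∈ range (n + 1), (x ^ 2) ^ t := by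
  rw [mul_sum, mul_sum]
  refine sum_le_sum fun t ht => ?_
  have htn : t ≤ n := mem_range_succ_iff.mp ht
  calc x ^ n * (b t * x ^ t) = x ^ (n - t) * b t * (x ^ 2) ^ t := by
        rw [← pow_mul, two_mul, pow_add, ← mul_assoc, ← mul_assoc, mul_comm (x ^ n),
          ← pow_sub_mul_pow x htn]
        ring
    _ ≤ b n * (x ^ 2) ^ t := mul_le_mul_of_nonneg_right (hdom t htn) (by positivity)

end OrderedSemiring

theorem alpha_n_lower_bound_general (k n : ℕ) (hk : 2 ≤ k) (a : ℕ → ℕ)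
    (hgrow : ∀ t, 1 ≤ t → t ≤ n → k * a (t - 1) ≤ a t)
    (hsum : ∑ t ∈ Finset.range (n + 1), a t * k ^ t = (2 * k + 1) ^ n) :
    ((2 * (k : ℝ) + 1) ^ n * (k : ℝ) ^ n * ((k : ℝ) ^ 2 - 1)) /
        ((k : ℝ) ^ (2 * (n + 1)) - 1) ≤ (a n : ℝ) := by
  have hk2 : (1 : ℝ) < (k : ℝ) ^ 2 := by
    have : (2 : ℝ) ≤ k := by exact_mod_cast hk
    nlinarith
  have hdom : ∀ t ≤ n, (k : ℝ) ^ (n - t) * a t ≤ a n := fun t ht => by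
    exact_mod_cast pow_sub_mul_le_of_mul_le_succ (Nat.zero_le k) hgrow ht
  have hsumR : ∑ t ∈ range (n + 1), (a t : ℝ) * (k : ℝ) ^ t = (2 * (k : ℝ) + 1) ^ n := by
    exact_mod_cast hsum
  have hbound := pow_mul_sum_mul_pow_le (Nat.cast_nonneg k) hdom
  rw [hsumR, geom_sum_eq hk2.ne', ← pow_mul, mul_div_assoc', le_div_iff₀ (by linarith)] at hbound
  have hden : (1 : ℝ) < (k : ℝ) ^ (2 * (n + 1)) :=
    pow_mul (k : ℝ) 2 (n + 1) ▸ one_lt_pow₀ hk2 n.succ_ne_zero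
  rw [div_le_iff₀ (sub_pos.mpr hden)]
  linarith

/-- Let `k ≥ 2`, `n ≥ 1` and natural numbers `α_0, …, α_n` with `α_0 = 1`,
`α_t ≥ k·α_{t−1}` for `1 ≤ t ≤ n`, and `∑_{t=0}^n α_t·k^t = (2k+1)^n`. Then
`α_n ≥ (2k+1)^n·k^n·(k² − 1)/(k^{2(n+1)} − 1)`. -/
theorem alpha_n_lower_bound (k n : ℕ) (hk : 2 ≤ k) (hn : 1 ≤ n) (a : ℕ → ℕ)
    (h0 : a 0 = 1)
    (hgrow : ∀ t, 1 ≤ t → t ≤ n → k * a (t - 1) ≤ a t)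
    (hsum : ∑ t ∈ Finset.range (n + 1), a t * k ^ t = (2 * k + 1) ^ n) :
    ((2 * (k : ℝ) + 1) ^ n * (k : ℝ) ^ n * ((k : ℝ) ^ 2 - 1)) /
        ((k : ℝ) ^ (2 * (n + 1)) - 1) ≤ (a n : ℝ) :=
  alpha_n_lower_bound_general k n hk a hgrow hsum
end

section
/- Let V ≥ 4 and n ≥ 2, and let A(C_V^n) and A(C_V^{n−1}) be the (real symmetric 0-1) adjacency matrices of the OR powers C_V^n and C_V^{n−1} of the cycle C_V. Then every eigenvalue of A(C_V^{n−1}) other than its largest eigenvalue is also an eigenvalue of A(C_V^n); moreover, the largest eigenvalue of A(C_V^n) is strictly larger than the largest eigenvalue of A(C_V^{n−1}) and the smallest eigenvalue of A(C_V^n) is strictly smaller than the smallest eigenvalue of A(C_V^{n−1}). In particular, A(C_V^n) has at least two distinct eigenvalues that are not eigenvalues of A(C_V^{n−1}). -/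
open SimpleGraph Finset
open Matrix
open scoped Classical

/-- The `n`-fold OR power of a simple graph `G`: vertices are `n`-tuples of vertices of `G`,
and two distinct tuples are adjacent iff at the first coordinate where they differ the
corresponding entries are adjacent in `G` (equivalently, the recursive OR-product
construction `G^1 = G`, `G^n = G OR-product G^(n-1)`). -/
def orPow {α : Type*} (G : SimpleGraph α) (n : ℕ) : SimpleGraph (Fin n → α) where
  Adj x y := ∃ j : Fin n, G.Adj (x j) (y j) ∧ ∀ i : Fin n, i < j → x i = y i
  symm := by
    constructor
    rintro x y ⟨j, hadj, hagree⟩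
    exact ⟨j, hadj.symm, fun i hi => (hagree i hi).symm⟩
  loopless := by
    constructor
    rintro x ⟨j, hadj, -⟩
    exact G.irrefl hadj


/-- Uniform (classical) 0-1 indicator of adjacency. -/
noncomputable def ind {α : Type*} (G : SimpleGraph α) (a b : α) : ℝ :=
  if G.Adj a b then 1 else 0

lemma ind_eq {α : Type*} (G : SimpleGraph α) (a b : α) :
    ind G a b = if G.Adj a b then 1 else 0 := rfl

/-- Uniform (classical) adjacency matrix. -/
noncomputable def adjM {α : Type*} [Fintype α] (G : SimpleGraph α) : Matrix α α ℝ :=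
  fun a b => ind G a b

lemma adjM_eq {α : Type*} [Fintype α] (G : SimpleGraph α) [DecidableRel G.Adj] :
    G.adjMatrix ℝ = adjM G := by
  ext a b
  by_cases h : G.Adj a b <;> simp [SimpleGraph.adjMatrix_apply, adjM, ind, h]

lemma adjM_mulVec {α : Type*} [Fintype α] (G : SimpleGraph α) (w : α → ℝ) (x : α) :
    (adjM G *ᵥ w) x = ∑ y, ind G x y * w y := by
  simp [adjM, Matrix.mulVec, dotProduct]

lemma adjM_nonneg {α : Type*} [Fintype α] (G : SimpleGraph α) (a b : α) : 0 ≤ adjM G a b := by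
  unfold adjM ind
  by_cases h : G.Adj a b <;> simp [h]

lemma adjM_isSymm {α : Type*} [Fintype α] (G : SimpleGraph α) : (adjM G).IsSymm := by
  ext a b
  rw [Matrix.transpose_apply]
  unfold adjM ind
  by_cases h : G.Adj a b
  · simp [h, G.adj_comm a b |>.mp h]
  · have h' : ¬ G.Adj b a := fun hc => h ((G.adj_comm b a).mp hc)
    simp [h, h']

lemma matSpec {m : Type*} [Fintype m] [DecidableEq m] (M : Matrix m m ℝ) (μ : ℝ) :
    μ ∈ spectrum ℝ M ↔ ∃ v, v ≠ 0 ∧ M.mulVec v = μ • v := by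
  rw [← AlgEquiv.spectrum_eq (Matrix.toLinAlgEquiv' : Matrix m m ℝ ≃ₐ[ℝ] _) M,
    ← Module.End.hasEigenvalue_iff_mem_spectrum]
  constructor
  · intro h
    obtain ⟨v, hv⟩ := h.exists_hasEigenvector
    exact ⟨v, hv.2, by simpa [Matrix.toLinAlgEquiv'_apply, Matrix.toLin'_apply] using hv.apply_eq_smul⟩
  · rintro ⟨v, hv, h⟩
    exact Module.End.hasEigenvalue_of_hasEigenvector
      ⟨Module.End.mem_eigenspace_iff.mpr (by simpa [Matrix.toLinAlgEquiv'_apply, Matrix.toLin'_apply] using h), hv⟩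

lemma abs_eig_le {m : Type*} [Fintype m] [Nonempty m] {M : Matrix m m ℝ}
    (h0 : ∀ i j, 0 ≤ M i j) {d : ℝ} (hrow : ∀ i, ∑ j, M i j = d)
    {μ : ℝ} {v : m → ℝ} (hv : v ≠ 0) (heig : M.mulVec v = μ • v) : |μ| ≤ d := by
  obtain ⟨i, -, hi⟩ := Finset.exists_max_image Finset.univ (fun i => |v i|) Finset.univ_nonempty
  have hipos : 0 < |v i| := by
    obtain ⟨j, hj⟩ := Function.ne_iff.mp hv
    exact lt_of_lt_of_le (abs_pos.mpr hj) (hi j (Finset.mem_univ j))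
  have hkey : |μ| * |v i| ≤ d * |v i| := by
    have h1 : |μ * v i| = |(M.mulVec v) i| := by rw [heig]; simp [abs_mul]
    calc |μ| * |v i| = |μ * v i| := (abs_mul μ (v i)).symm
      _ = |∑ j, M i j * v j| := by rw [h1]; rfl
      _ ≤ ∑ j, |M i j * v j| := Finset.abs_sum_le_sum_abs _ _
      _ ≤ ∑ j, M i j * |v i| := by
          refine Finset.sum_le_sum fun j _ => ?_
          rw [abs_mul, abs_of_nonneg (h0 i j)]
          exact mul_le_mul_of_nonneg_left (hi j (Finset.mem_univ j)) (h0 i j)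
      _ = d * |v i| := by rw [← Finset.sum_mul, hrow i]
  exact le_of_mul_le_mul_right hkey hipos

lemma sum_eig_zero {m : Type*} [Fintype m] {M : Matrix m m ℝ} (hM : M.IsSymm)
    {d : ℝ} (hrow : ∀ i, ∑ j, M i j = d)
    {μ : ℝ} {v : m → ℝ} (heig : M.mulVec v = μ • v) (hne : μ ≠ d) : ∑ i, v i = 0 := by
  have h1 : ∑ i, (M.mulVec v) i = μ * ∑ i, v i := by
    rw [heig]; simp [Finset.mul_sum]
  have h2 : ∑ i, (M.mulVec v) i = d * ∑ i, v i := by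
    have hsymm : ∀ i j, M i j = M j i := fun i j => by
      conv_lhs => rw [← hM]
      rfl
    calc ∑ i, (M.mulVec v) i = ∑ i, ∑ j, M i j * v j := rfl
      _ = ∑ j, (∑ i, M i j) * v j := by rw [Finset.sum_comm]; simp [Finset.sum_mul]
      _ = ∑ j, d * v j := by
          refine Finset.sum_congr rfl fun j _ => ?_
          congr 1
          rw [← hrow j]
          exact Finset.sum_congr rfl fun i _ => hsymm i j
      _ = d * ∑ j, v j := by rw [Finset.mul_sum]
  rcases mul_eq_mul_right_iff.mp (by linarith : μ * ∑ i, v i = d * ∑ i, v i) with h | h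
  · exact absurd h hne
  · exact h

section OrPow

variable {α : Type*} (G : SimpleGraph α)

lemma orPow_zero_adj (x y : Fin 0 → α) : ¬ (orPow G 0).Adj x y := by
  rintro ⟨j, -, -⟩; exact j.elim0

lemma orPow_succ_adj {n : ℕ} (x y : Fin (n+1) → α) :
    (orPow G (n+1)).Adj x y ↔
      G.Adj (x 0) (y 0) ∨ (x 0 = y 0 ∧ (orPow G n).Adj (Fin.tail x) (Fin.tail y)) := by
  constructor
  · rintro ⟨j, hadj, hag⟩
    rcases Fin.eq_zero_or_eq_succ j with rfl | ⟨i, rfl⟩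
    · exact Or.inl hadj
    · refine Or.inr ⟨hag 0 (Fin.succ_pos i), i, hadj, fun i' hi' => hag i'.succ ?_⟩
      exact Fin.succ_lt_succ_iff.mpr hi'
  · rintro (h | ⟨h0, i, hadj, hag⟩)
    · exact ⟨0, h, fun i hi => absurd hi (Fin.not_lt_zero i)⟩
    · refine ⟨i.succ, hadj, fun i' hi' => ?_⟩
      rcases Fin.eq_zero_or_eq_succ i' with rfl | ⟨i'', rfl⟩
      · exact h0
      · exact hag i'' (Fin.succ_lt_succ_iff.mp hi')

lemma key [Fintype α] {n : ℕ} (x : Fin (n+1) → α) (f : (Fin (n+1) → α) → ℝ) :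
    ∑ y : Fin (n+1) → α, ind (orPow G (n+1)) x y * f y
      = (∑ a : α, ind G (x 0) a * (∑ t : Fin n → α, f (Fin.cons a t)))
        + ∑ t : Fin n → α, ind (orPow G n) (Fin.tail x) t * f (Fin.cons (x 0) t) := by
  classical
  rw [← Fintype.sum_equiv (Fin.consEquiv (fun _ : Fin (n+1) => α))
      (fun p => ind (orPow G (n+1)) x (Fin.cons p.1 p.2) * f (Fin.cons p.1 p.2))
      (fun y => ind (orPow G (n+1)) x y * f y) (fun p => rfl)]
  rw [Fintype.sum_prod_type]
  have hsplit : ∀ (a : α) (t : Fin n → α),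
      ind (orPow G (n+1)) x (Fin.cons a t) * f (Fin.cons a t)
        = ind G (x 0) a * f (Fin.cons a t)
          + (if x 0 = a ∧ (orPow G n).Adj (Fin.tail x) t then f (Fin.cons a t) else 0) := by
    intro a t
    rw [ind_eq, ind_eq]
    rw [if_congr (orPow_succ_adj G x (Fin.cons a t)) rfl rfl]
    simp only [Fin.cons_zero, Fin.tail_cons]
    by_cases h1 : G.Adj (x 0) a
    · have h2 : ¬ (x 0 = a ∧ (orPow G n).Adj (Fin.tail x) t) := by
        rintro ⟨rfl, -⟩; exact G.irrefl h1
      simp [h1, h2]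
    · by_cases h2 : x 0 = a ∧ (orPow G n).Adj (Fin.tail x) t <;> simp [h1, h2]
  simp only [hsplit, Finset.sum_add_distrib]
  congr 1
  · refine Finset.sum_congr rfl fun a _ => ?_
    rw [Finset.mul_sum]
  · rw [Finset.sum_comm]
    refine Finset.sum_congr rfl fun t _ => ?_
    by_cases h : (orPow G n).Adj (Fin.tail x) t
    · simp only [h, and_true]
      rw [Finset.sum_ite_eq Finset.univ (x 0) (fun a => f (Fin.cons a t))]
      simp [ind_eq, h]
    · simp [ind_eq, h]

end OrPow

section Cycle

lemma cyc_adj_iff (W : ℕ) (x b : Fin (W+4)) :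
    (cycleGraph (W+4)).Adj x b ↔ b = x - 1 ∨ b = x + 1 := by
  have h := cycleGraph_neighborSet (n := W+2) (v := x)
  constructor
  · intro hadj
    have : b ∈ (cycleGraph (W+4)).neighborSet x := hadj
    rw [h] at this
    simpa using this
  · intro hb
    have : b ∈ ({x - 1, x + 1} : Set (Fin (W+4))) := by simpa using hb
    rw [← h] at this
    exact this

lemma cyc_sub_ne_add (W : ℕ) (x : Fin (W+4)) : x - 1 ≠ x + 1 := by
  intro heq
  have h3 : x = x + 2 := by
    conv_lhs => rw [← sub_add_cancel x 1, heq]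
    rw [add_assoc]
    norm_num
    rfl
  have h2 : (2 : Fin (W+4)) = 0 := left_eq_add.mp h3
  have hv : ((2 : Fin (W+4)) : ℕ) = 2 := by
    rw [Fin.coe_ofNat_eq_mod]
    exact Nat.mod_eq_of_lt (by omega)
  rw [Fin.ext_iff, hv] at h2
  simp at h2

lemma cyc_sum (W : ℕ) (u : Fin (W+4) → ℝ) (x : Fin (W+4)) :
    ∑ b : Fin (W+4), ind (cycleGraph (W+4)) x b * u b = u (x - 1) + u (x + 1) := by
  have h1 : ∀ b : Fin (W+4), ind (cycleGraph (W+4)) x b * u b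
      = if b ∈ ({x - 1, x + 1} : Finset (Fin (W+4))) then u b else 0 := fun b => by
    by_cases h : (cycleGraph (W+4)).Adj x b
    · rw [if_pos (by simpa using (cyc_adj_iff W x b).mp h)]
      simp [ind_eq, h]
    · rw [if_neg (fun hmem => h ((cyc_adj_iff W x b).mpr (by simpa using hmem)))]
      simp [ind_eq, h]
  simp only [h1]
  rw [Finset.sum_ite_mem, Finset.univ_inter, Finset.sum_pair (cyc_sub_ne_add W x)]

end Cycle

section RowSum

lemma rowSum (W : ℕ) : ∀ (n : ℕ) (x : Fin n → Fin (W+4)),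
    ∑ y : Fin n → Fin (W+4), ind (orPow (cycleGraph (W+4)) n) x y
      = 2 * ∑ i ∈ Finset.range n, ((W+4:ℕ):ℝ)^i := by
  intro n
  induction n with
  | zero => intro x; simp [ind_eq, orPow_zero_adj]
  | succ n ih =>
    intro x
    have hone : (∑ y : Fin (n+1) → Fin (W+4), ind (orPow (cycleGraph (W+4)) (n+1)) x y)
        = ∑ y : Fin (n+1) → Fin (W+4),
            ind (orPow (cycleGraph (W+4)) (n+1)) x y * (fun _ => (1:ℝ)) y := by
      refine Finset.sum_congr rfl fun y _ => ?_
      simp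
    rw [hone, key]
    have hcard : ∑ t : Fin n → Fin (W+4), (1:ℝ) = ((W+4:ℕ):ℝ)^n := by
      rw [Finset.sum_const, Finset.card_univ]
      simp [Fintype.card_fun]
    have h1 : (∑ a : Fin (W+4), ind (cycleGraph (W+4)) (x 0) a
          * (∑ _t : Fin n → Fin (W+4), (1:ℝ))) = 2 * ((W+4:ℕ):ℝ)^n := by
      rw [cyc_sum W (fun _ => ∑ _t : Fin n → Fin (W+4), (1:ℝ)) (x 0), hcard]
      ring
    have h2 : (∑ t : Fin n → Fin (W+4),
          ind (orPow (cycleGraph (W+4)) n) (Fin.tail x) t * (1:ℝ))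
        = 2 * ∑ i ∈ Finset.range n, ((W+4:ℕ):ℝ)^i := by
      simp only [mul_one]
      exact ih (Fin.tail x)
    rw [h1, h2, Finset.sum_range_succ]
    ring

end RowSum

section Lifts

variable {α : Type*} [Fintype α] (G : SimpleGraph α)

lemma lift1 {n : ℕ} {v : (Fin n → α) → ℝ} {μ : ℝ}
    (hsum : ∑ t, v t = 0) (heig : (adjM (orPow G n)).mulVec v = μ • v) :
    (adjM (orPow G (n+1))).mulVec (fun x => v (Fin.tail x)) = μ • (fun x => v (Fin.tail x)) := by
  funext x
  rw [adjM_mulVec, key]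
  simp only [Fin.tail_cons]
  have h1 : (∑ a : α, ind G (x 0) a * (∑ t : Fin n → α, v t)) = 0 := by
    simp [hsum]
  rw [h1, zero_add]
  have h2 : (∑ t : Fin n → α, ind (orPow G n) (Fin.tail x) t * v t)
      = (adjM (orPow G n)).mulVec v (Fin.tail x) := (adjM_mulVec _ _ _).symm
  rw [h2, heig]
  simp

lemma lift2 {u : α → ℝ} {lam : ℝ}
    (heig : (adjM G).mulVec u = lam • u) {n : ℕ} {D : ℝ}
    (hrow : ∀ t : Fin n → α, ∑ s : Fin n → α, ind (orPow G n) t s = D) :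
    (adjM (orPow G (n+1))).mulVec (fun x => u (x 0))
      = (lam * (Fintype.card (Fin n → α) : ℝ) + D) • (fun x => u (x 0)) := by
  funext x
  rw [adjM_mulVec, key]
  simp only [Fin.cons_zero]
  have h1 : (∑ a : α, ind G (x 0) a * (∑ _t : Fin n → α, u a))
      = (Fintype.card (Fin n → α) : ℝ) * (lam * u (x 0)) := by
    have ha : ∀ a : α, (∑ _t : Fin n → α, u a) = (Fintype.card (Fin n → α) : ℝ) * u a := by
      intro a; rw [Finset.sum_const, Finset.card_univ]; simp
    simp only [ha]
    have hc : (∑ a : α, ind G (x 0) a * ((Fintype.card (Fin n → α) : ℝ) * u a))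
        = (Fintype.card (Fin n → α) : ℝ) * ∑ a : α, ind G (x 0) a * u a := by
      rw [Finset.mul_sum]
      refine Finset.sum_congr rfl fun a _ => ?_
      ring
    rw [hc]
    have := congrFun heig (x 0)
    rw [adjM_mulVec] at this
    rw [this]
    simp [mul_comm]
  have h2 : (∑ t : Fin n → α, ind (orPow G n) (Fin.tail x) t * u (x 0))
      = D * u (x 0) := by
    rw [← Finset.sum_mul, hrow (Fin.tail x)]
  rw [h1, h2]
  simp only [Pi.smul_apply, smul_eq_mul]
  ring

end Lifts

section CycEig

lemma cycEig (W : ℕ) :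
    (adjM (cycleGraph (W+4))).mulVec
        (fun a : Fin (W+4) => Real.cos (2 * Real.pi * ((W+4)/2 : ℕ) / ((W+4:ℕ):ℝ) * a.val))
      = (2 * Real.cos (2 * Real.pi * ((W+4)/2 : ℕ) / ((W+4:ℕ):ℝ))) •
        fun a : Fin (W+4) => Real.cos (2 * Real.pi * ((W+4)/2 : ℕ) / ((W+4:ℕ):ℝ) * a.val) := by
  set m : ℕ := (W+4)/2 with hm
  set θ : ℝ := 2 * Real.pi * m / ((W+4:ℕ):ℝ) with hθ
  have hV0 : ((W+4:ℕ):ℝ) ≠ 0 := by positivity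
  have hθV : θ * ((W+4:ℕ):ℝ) = (m:ℝ) * (2 * Real.pi) := by
    rw [hθ, div_mul_cancel₀ _ hV0]; ring
  have hcast : ((W+4:ℕ):ℝ) = (W:ℝ) + 4 := by push_cast; ring
  have hθV' : θ * ((W:ℝ) + 4) = (m:ℝ) * (2 * Real.pi) := by rw [← hcast]; exact hθV
  have hper : ∀ j : ℕ, Real.cos (θ * ((j % (W+4) : ℕ) : ℝ)) = Real.cos (θ * (j:ℝ)) := by
    intro j
    have h := Nat.div_add_mod j (W+4)
    have h2 : ((W+4:ℕ):ℝ) * ((j/(W+4) : ℕ) : ℝ) + ((j % (W+4) : ℕ) : ℝ) = (j:ℝ) := by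
      exact_mod_cast congrArg (Nat.cast : ℕ → ℝ) h
    have harith : θ * (j:ℝ) = θ * ((j % (W+4) : ℕ) : ℝ)
        + ((((m:ℤ) * ((j / (W+4) : ℕ) : ℤ)) : ℤ) : ℝ) * (2 * Real.pi) := by
      have h3 : ((((m:ℤ) * ((j / (W+4) : ℕ) : ℤ)) : ℤ) : ℝ) = (m:ℝ) * ((j/(W+4) : ℕ):ℝ) := by
        simp only [Int.cast_mul, Int.cast_natCast]
      rw [h3]
      linear_combination (-θ) * h2 + ((j/(W+4) : ℕ) : ℝ) * hθV
    rw [harith, Real.cos_add_int_mul_two_pi]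
  funext x
  rw [adjM_mulVec, cyc_sum]
  have hval1 : ((x + 1 : Fin (W+4)).val) = (x.val + 1) % (W+4) := by
    rw [Fin.add_def]
    simp only [Fin.val_one]
  have hval2 : ((x - 1 : Fin (W+4)).val) = (x.val + (W+3)) % (W+4) := by
    rw [Fin.sub_def]
    simp only [Fin.val_one]
    congr 1
    omega
  have hu1 : Real.cos (θ * ((x + 1 : Fin (W+4)).val : ℝ)) = Real.cos (θ * ((x.val:ℝ) + 1)) := by
    rw [hval1, hper (x.val + 1)]; push_cast; ring_nf
  have hu2 : Real.cos (θ * ((x - 1 : Fin (W+4)).val : ℝ))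
      = Real.cos (θ * (x.val:ℝ) - θ) := by
    rw [hval2, hper (x.val + (W+3))]
    have : θ * ((x.val + (W+3) : ℕ) : ℝ) = (θ * (x.val:ℝ) - θ) + (m:ℤ) * (2 * Real.pi) := by
      push_cast
      linear_combination hθV'
    rw [this, Real.cos_add_int_mul_two_pi]
  simp only [Pi.smul_apply, smul_eq_mul]
  rw [hu2, hu1]
  have : θ * ((x.val:ℝ) + 1) = θ * (x.val:ℝ) + θ := by ring
  rw [this, Real.cos_add, Real.cos_sub]
  ring

lemma cosθ_le (W : ℕ) :
    Real.cos (2 * Real.pi * ((W+4)/2 : ℕ) / ((W+4:ℕ):ℝ)) ≤ -(Real.sqrt 2 / 2) := by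
  set m : ℕ := (W+4)/2 with hm
  set θ : ℝ := 2 * Real.pi * m / ((W+4:ℕ):ℝ) with hθ
  have hπ := Real.pi_pos
  have hm1 : 2 * m ≤ W + 4 := by omega
  have hm2 : 3 * (W + 4) ≤ 8 * m := by omega
  have hm1' : 2 * (m:ℝ) ≤ (W:ℝ) + 4 := by exact_mod_cast hm1
  have hm2' : 3 * ((W:ℝ) + 4) ≤ 8 * (m:ℝ) := by exact_mod_cast hm2
  have hVpos : (0:ℝ) < ((W+4:ℕ):ℝ) := by positivity
  have hcast : ((W+4:ℕ):ℝ) = (W:ℝ) + 4 := by push_cast; ring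
  have hθ1 : θ ≤ Real.pi := by
    rw [hθ, div_le_iff₀ hVpos, hcast]
    nlinarith
  have hθ2 : 3 * Real.pi / 4 ≤ θ := by
    rw [hθ, le_div_iff₀ hVpos, hcast]
    nlinarith
  calc Real.cos θ ≤ Real.cos (3 * Real.pi / 4) :=
        Real.cos_le_cos_of_nonneg_of_le_pi (by positivity) hθ1 hθ2
    _ = -(Real.sqrt 2 / 2) := by
        rw [show (3 * Real.pi / 4 : ℝ) = Real.pi - Real.pi / 4 by ring,
          Real.cos_pi_sub, Real.cos_pi_div_four]

end CycEig


set_option maxHeartbeats 1000000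

/-- For `V ≥ 4`, `n ≥ 2`: every eigenvalue of the adjacency matrix of `C_V^{n−1}` other than
its largest one is also an eigenvalue of the adjacency matrix of `C_V^n`; the largest
eigenvalue strictly increases and the smallest strictly decreases from `C_V^{n−1}` to
`C_V^n`; in particular `C_V^n` has two distinct eigenvalues that are not eigenvalues of
`C_V^{n−1}`. -/
theorem spectrum_orPow_cycle_step (V n : ℕ) (hV : 4 ≤ V) (hn : 2 ≤ n) :
    (∀ μ ∈ spectrum ℝ ((orPow (cycleGraph V) (n - 1)).adjMatrix ℝ),
        μ ≠ sSup (spectrum ℝ ((orPow (cycleGraph V) (n - 1)).adjMatrix ℝ)) →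
        μ ∈ spectrum ℝ ((orPow (cycleGraph V) n).adjMatrix ℝ)) ∧
    sSup (spectrum ℝ ((orPow (cycleGraph V) (n - 1)).adjMatrix ℝ))
      < sSup (spectrum ℝ ((orPow (cycleGraph V) n).adjMatrix ℝ)) ∧
    sInf (spectrum ℝ ((orPow (cycleGraph V) n).adjMatrix ℝ))
      < sInf (spectrum ℝ ((orPow (cycleGraph V) (n - 1)).adjMatrix ℝ)) ∧
    ∃ μ₁ μ₂ : ℝ, μ₁ ∈ spectrum ℝ ((orPow (cycleGraph V) n).adjMatrix ℝ) ∧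
      μ₂ ∈ spectrum ℝ ((orPow (cycleGraph V) n).adjMatrix ℝ) ∧ μ₁ ≠ μ₂ ∧
      μ₁ ∉ spectrum ℝ ((orPow (cycleGraph V) (n - 1)).adjMatrix ℝ) ∧
      μ₂ ∉ spectrum ℝ ((orPow (cycleGraph V) (n - 1)).adjMatrix ℝ) := by
  obtain ⟨W, rfl⟩ : ∃ W, V = W + 4 := ⟨V - 4, by omega⟩
  obtain ⟨k, rfl⟩ : ∃ k, n = k + 1 := ⟨n - 1, by omega⟩
  simp only [Nat.add_sub_cancel, adjM_eq]
  haveI : Nonempty (Fin (W+4)) := ⟨⟨0, by omega⟩⟩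
  -- abbreviations as haves
  have hrowB : ∀ x : Fin k → Fin (W+4), ∑ y, adjM (orPow (cycleGraph (W+4)) k) x y
      = 2 * ∑ i ∈ Finset.range k, ((W+4:ℕ):ℝ)^i := fun x => rowSum W k x
  have hrowM : ∀ x : Fin (k+1) → Fin (W+4), ∑ y, adjM (orPow (cycleGraph (W+4)) (k+1)) x y
      = 2 * ∑ i ∈ Finset.range (k+1), ((W+4:ℕ):ℝ)^i := fun x => rowSum W (k+1) x
  have honeB : (fun _ : Fin k → Fin (W+4) => (1:ℝ)) ≠ 0 := by
    intro h
    have := congrFun h (fun _ => ⟨0, by omega⟩)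
    norm_num at this
  have honeM : (fun _ : Fin (k+1) → Fin (W+4) => (1:ℝ)) ≠ 0 := by
    intro h
    have := congrFun h (fun _ => ⟨0, by omega⟩)
    norm_num at this
  have hmulB : (adjM (orPow (cycleGraph (W+4)) k)).mulVec (fun _ => 1)
      = (2 * ∑ i ∈ Finset.range k, ((W+4:ℕ):ℝ)^i) • (fun _ : Fin k → Fin (W+4) => (1:ℝ)) := by
    funext x
    rw [adjM_mulVec]
    simp only [mul_one, Pi.smul_apply, smul_eq_mul]
    rw [← hrowB x]
    rfl
  have hmulM : (adjM (orPow (cycleGraph (W+4)) (k+1))).mulVec (fun _ => 1)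
      = (2 * ∑ i ∈ Finset.range (k+1), ((W+4:ℕ):ℝ)^i)
        • (fun _ : Fin (k+1) → Fin (W+4) => (1:ℝ)) := by
    funext x
    rw [adjM_mulVec]
    simp only [mul_one, Pi.smul_apply, smul_eq_mul]
    rw [← hrowM x]
    rfl
  have hBmem : (2 * ∑ i ∈ Finset.range k, ((W+4:ℕ):ℝ)^i)
      ∈ spectrum ℝ (adjM (orPow (cycleGraph (W+4)) k)) :=
    (matSpec _ _).mpr ⟨_, honeB, hmulB⟩
  have hMmem : (2 * ∑ i ∈ Finset.range (k+1), ((W+4:ℕ):ℝ)^i)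
      ∈ spectrum ℝ (adjM (orPow (cycleGraph (W+4)) (k+1))) :=
    (matSpec _ _).mpr ⟨_, honeM, hmulM⟩
  have habsB : ∀ μ ∈ spectrum ℝ (adjM (orPow (cycleGraph (W+4)) k)),
      |μ| ≤ 2 * ∑ i ∈ Finset.range k, ((W+4:ℕ):ℝ)^i := by
    intro μ hμ
    obtain ⟨v, hv0, hveq⟩ := (matSpec _ _).mp hμ
    exact abs_eig_le (adjM_nonneg _) hrowB hv0 hveq
  have habsM : ∀ μ ∈ spectrum ℝ (adjM (orPow (cycleGraph (W+4)) (k+1))),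
      |μ| ≤ 2 * ∑ i ∈ Finset.range (k+1), ((W+4:ℕ):ℝ)^i := by
    intro μ hμ
    obtain ⟨v, hv0, hveq⟩ := (matSpec _ _).mp hμ
    exact abs_eig_le (adjM_nonneg _) hrowM hv0 hveq
  have hsupB : sSup (spectrum ℝ (adjM (orPow (cycleGraph (W+4)) k)))
      = 2 * ∑ i ∈ Finset.range k, ((W+4:ℕ):ℝ)^i :=
    IsGreatest.csSup_eq ⟨hBmem, fun μ hμ => le_trans (le_abs_self μ) (habsB μ hμ)⟩
  have hsupM : sSup (spectrum ℝ (adjM (orPow (cycleGraph (W+4)) (k+1))))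
      = 2 * ∑ i ∈ Finset.range (k+1), ((W+4:ℕ):ℝ)^i :=
    IsGreatest.csSup_eq ⟨hMmem, fun μ hμ => le_trans (le_abs_self μ) (habsM μ hμ)⟩
  have hpk : (0:ℝ) < ((W+4:ℕ):ℝ)^k := by positivity
  have hS0 : (0:ℝ) ≤ ∑ i ∈ Finset.range k, ((W+4:ℕ):ℝ)^i :=
    Finset.sum_nonneg fun i _ => by positivity
  have hDkDn : 2 * ∑ i ∈ Finset.range k, ((W+4:ℕ):ℝ)^i + 2 * ((W+4:ℕ):ℝ)^k
      = 2 * ∑ i ∈ Finset.range (k+1), ((W+4:ℕ):ℝ)^i := by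
    rw [Finset.sum_range_succ]; ring
  -- the small eigenvalue of M
  have hcyc := cycEig W
  have hcos := cosθ_le W
  have h43 : (4/3:ℝ) ≤ Real.sqrt 2 := by
    nlinarith [Real.sq_sqrt (show (0:ℝ) ≤ 2 by norm_num), Real.sqrt_nonneg 2]
  have hlam : 2 * Real.cos (2 * Real.pi * ((W+4)/2 : ℕ) / ((W+4:ℕ):ℝ)) ≤ -(4/3) := by
    linarith
  have hw := lift2 (cycleGraph (W+4)) hcyc (n := k) (fun t => rowSum W k t)
  have hcard : (Fintype.card (Fin k → Fin (W+4)) : ℝ) = ((W+4:ℕ):ℝ)^k := by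
    simp [Fintype.card_fun]
  rw [hcard] at hw
  have hw0 : (fun x : Fin (k+1) → Fin (W+4) =>
      Real.cos (2 * Real.pi * ((W+4)/2 : ℕ) / ((W+4:ℕ):ℝ) * ((x 0 : Fin (W+4)) : ℕ))) ≠ 0 := by
    intro h
    have := congrFun h (fun _ => ⟨0, by omega⟩)
    norm_num at this
  have hμ₂mem : (2 * Real.cos (2 * Real.pi * ((W+4)/2 : ℕ) / ((W+4:ℕ):ℝ)) * ((W+4:ℕ):ℝ)^k
        + 2 * ∑ i ∈ Finset.range k, ((W+4:ℕ):ℝ)^i)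
      ∈ spectrum ℝ (adjM (orPow (cycleGraph (W+4)) (k+1))) :=
    (matSpec _ _).mpr ⟨_, hw0, hw⟩
  have hgeo : (∑ i ∈ Finset.range k, ((W+4:ℕ):ℝ)^i) * (((W+4:ℕ):ℝ) - 1)
      = ((W+4:ℕ):ℝ)^k - 1 := geom_sum_mul _ k
  have hVR4 : (4:ℝ) ≤ ((W+4:ℕ):ℝ) := by exact_mod_cast (by omega : 4 ≤ W+4)
  have hS3 : 3 * ∑ i ∈ Finset.range k, ((W+4:ℕ):ℝ)^i ≤ ((W+4:ℕ):ℝ)^k - 1 := by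
    nlinarith
  have hlamP : 2 * Real.cos (2 * Real.pi * ((W+4)/2 : ℕ) / ((W+4:ℕ):ℝ)) * ((W+4:ℕ):ℝ)^k
      ≤ -(4/3) * ((W+4:ℕ):ℝ)^k :=
    mul_le_mul_of_nonneg_right hlam (le_of_lt hpk)
  have hμ₂lt : 2 * Real.cos (2 * Real.pi * ((W+4)/2 : ℕ) / ((W+4:ℕ):ℝ)) * ((W+4:ℕ):ℝ)^k
        + 2 * ∑ i ∈ Finset.range k, ((W+4:ℕ):ℝ)^i
      < -(2 * ∑ i ∈ Finset.range k, ((W+4:ℕ):ℝ)^i) := by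
    linarith
  refine ⟨?_, ?_, ?_, ?_⟩
  · -- part 1
    intro μ hμ hne
    have hμ' : μ ∈ spectrum ℝ (adjM (orPow (cycleGraph (W+4)) k)) := hμ
    have hne' : μ ≠ 2 * ∑ i ∈ Finset.range k, ((W+4:ℕ):ℝ)^i := fun h => hne (h.trans hsupB.symm)
    obtain ⟨v, hv0, hveq⟩ := (matSpec _ _).mp hμ'
    have hsum : ∑ t, v t = 0 := sum_eig_zero (adjM_isSymm _) hrowB hveq hne'
    refine (matSpec _ _).mpr ⟨fun x => v (Fin.tail x), ?_, lift1 _ hsum hveq⟩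
    obtain ⟨t, ht⟩ := Function.ne_iff.mp hv0
    exact Function.ne_iff.mpr ⟨Fin.cons ⟨0, by omega⟩ t, by simpa [Fin.tail_cons] using ht⟩
  · -- part 2
    have h : sSup (spectrum ℝ (adjM (orPow (cycleGraph (W+4)) k)))
        < sSup (spectrum ℝ (adjM (orPow (cycleGraph (W+4)) (k+1)))) := by
      rw [hsupB, hsupM]
      linarith
    exact h
  · -- part 3
    have hbddM : BddBelow (spectrum ℝ (adjM (orPow (cycleGraph (W+4)) (k+1)))) :=
      ⟨-(2 * ∑ i ∈ Finset.range (k+1), ((W+4:ℕ):ℝ)^i),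
        fun μ hμ => by linarith [neg_abs_le μ, habsM μ hμ]⟩
    have h1 := csInf_le hbddM hμ₂mem
    have h2 : -(2 * ∑ i ∈ Finset.range k, ((W+4:ℕ):ℝ)^i)
        ≤ sInf (spectrum ℝ (adjM (orPow (cycleGraph (W+4)) k))) :=
      le_csInf ⟨_, hBmem⟩ (fun μ hμ => by linarith [neg_abs_le μ, habsB μ hμ])
    have h3 : sInf (spectrum ℝ (adjM (orPow (cycleGraph (W+4)) (k+1))))
        < sInf (spectrum ℝ (adjM (orPow (cycleGraph (W+4)) k))) := by linarith
    exact h3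
  · -- part 4
    refine ⟨2 * ∑ i ∈ Finset.range (k+1), ((W+4:ℕ):ℝ)^i,
      2 * Real.cos (2 * Real.pi * ((W+4)/2 : ℕ) / ((W+4:ℕ):ℝ)) * ((W+4:ℕ):ℝ)^k
        + 2 * ∑ i ∈ Finset.range k, ((W+4:ℕ):ℝ)^i,
      hMmem, hμ₂mem, ?_, ?_, ?_⟩
    · refine ne_of_gt ?_
      linarith
    · intro h
      have h' : (2 * ∑ i ∈ Finset.range (k+1), ((W+4:ℕ):ℝ)^i)
          ∈ spectrum ℝ (adjM (orPow (cycleGraph (W+4)) k)) := h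
      have := habsB _ h'
      rw [abs_of_nonneg (by positivity)] at this
      linarith
    · intro h
      have h' : (2 * Real.cos (2 * Real.pi * ((W+4)/2 : ℕ) / ((W+4:ℕ):ℝ)) * ((W+4:ℕ):ℝ)^k
            + 2 * ∑ i ∈ Finset.range k, ((W+4:ℕ):ℝ)^i)
          ∈ spectrum ℝ (adjM (orPow (cycleGraph (W+4)) k)) := h
      have := habsB _ h'
      linarith [neg_abs_le (2 * Real.cos (2 * Real.pi * ((W+4)/2 : ℕ) / ((W+4:ℕ):ℝ))
        * ((W+4:ℕ):ℝ)^k + 2 * ∑ i ∈ Finset.range k, ((W+4:ℕ):ℝ)^i)]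
end

section
/- Let G be a finite simple graph and n ≥ 1. The independence number of the n-fold OR power G^n equals the n-th power of the independence number of G: α(G^n) = (α(G))^n. In particular, the maximal cardinality of an independent set is multiplicative under the OR power construction. -/
open SimpleGraph Finset

/-- A set of vertices is independent if no two of its (distinct) elements are adjacent. -/
def IsIndepSetOf {α : Type*} (G : SimpleGraph α) (s : Set α) : Prop :=
  ∀ x ∈ s, ∀ y ∈ s, x ≠ y → ¬G.Adj x y

lemma orPow_adj_succ {α : Type*} (G : SimpleGraph α) (n : ℕ) (x y : Fin (n + 1) → α) :
    (orPow G (n + 1)).Adj x y ↔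
      G.Adj (x 0) (y 0) ∨ (x 0 = y 0 ∧ (orPow G n).Adj (Fin.tail x) (Fin.tail y)) := by
  constructor
  · rintro ⟨j, hadj, hlt⟩
    induction j using Fin.cases with
    | zero => exact Or.inl hadj
    | succ i =>
      refine Or.inr ⟨hlt 0 (Fin.succ_pos i), ⟨i, hadj, fun k hk => ?_⟩⟩
      exact hlt k.succ (by simpa using hk)
  · rintro (h | ⟨h0, i, hadj, hlt⟩)
    · exact ⟨0, h, fun i hi => absurd hi (Fin.not_lt_zero i)⟩
    · refine ⟨i.succ, hadj, fun k hk => ?_⟩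
      induction k using Fin.cases with
      | zero => exact h0
      | succ m => exact hlt m (by simpa using hk)

lemma indep_card_le {α : Type*} [DecidableEq α] (G : SimpleGraph α) (a : ℕ)
    (hub : ∀ s : Finset α, IsIndepSetOf G ↑s → s.card ≤ a) :
    ∀ n (T : Finset (Fin n → α)), IsIndepSetOf (orPow G n) ↑T → T.card ≤ a ^ n := by
  intro n
  induction n with
  | zero =>
    intro T _
    simpa using Finset.card_le_card (Finset.subset_univ T) |>.trans
      (by simp [Fintype.card_pi])
  | succ n ih =>
    intro T hT
    classical
    set B : Finset α := T.image (fun x => x 0) with hB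
    have hsum : T.card = ∑ b ∈ B, (T.filter fun x => x 0 = b).card :=
      Finset.card_eq_sum_card_fiberwise (fun x hx => Finset.mem_image_of_mem _ hx)
    -- B is independent in G
    have hBindep : IsIndepSetOf G ↑B := by
      intro b hb c hc hbc hadj
      simp only [hB, Finset.coe_image, Set.mem_image, Finset.mem_coe] at hb hc
      obtain ⟨x, hx, rfl⟩ := hb
      obtain ⟨y, hy, rfl⟩ := hc
      have hxy : x ≠ y := fun h => hbc (by rw [h])
      exact hT x hx y hy hxy ((orPow_adj_succ G n x y).mpr (Or.inl hadj))
    have hBcard : B.card ≤ a := hub B hBindep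
    -- each fiber has card ≤ a ^ n
    have hfiber : ∀ b, (T.filter fun x => x 0 = b).card ≤ a ^ n := by
      intro b
      have hinj : Set.InjOn (Fin.tail : (Fin (n+1) → α) → Fin n → α) ↑(T.filter fun x => x 0 = b) := by
        intro x hx y hy hxy
        simp only [Finset.coe_filter, Set.mem_setOf_eq] at hx hy
        have : x = Fin.cons (x 0) (Fin.tail x) := (Fin.cons_self_tail x).symm
        rw [this, hxy, hx.2, ← hy.2, Fin.cons_self_tail]
      have hcard : (T.filter fun x => x 0 = b).card
          = ((T.filter fun x => x 0 = b).image (Fin.tail : (Fin (n+1) → α) → Fin n → α)).card :=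
        (Finset.card_image_of_injOn hinj).symm
      rw [hcard]
      refine ih _ ?_
      intro u hu v hv huv hadj
      simp only [Finset.coe_image, Set.mem_image, Finset.mem_coe,
        Finset.mem_filter] at hu hv
      obtain ⟨x, ⟨hx, hx0⟩, rfl⟩ := hu
      obtain ⟨y, ⟨hy, hy0⟩, rfl⟩ := hv
      have hxy : x ≠ y := fun h => huv (by rw [h])
      exact hT x hx y hy hxy
        ((orPow_adj_succ G n x y).mpr (Or.inr ⟨hx0.trans hy0.symm, hadj⟩))
    calc T.card = ∑ b ∈ B, (T.filter fun x => x 0 = b).card := hsum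
      _ ≤ ∑ _b ∈ B, a ^ n := Finset.sum_le_sum fun b _ => hfiber b
      _ = B.card * a ^ n := by rw [Finset.sum_const, smul_eq_mul]
      _ ≤ a * a ^ n := Nat.mul_le_mul_right _ hBcard
      _ = a ^ (n + 1) := (pow_succ' a n).symm

/-- The independence number is multiplicative under the OR power: if `a` is the maximum
cardinality of an independent set of `G`, then `a^n` is the maximum cardinality of an
independent set of `G^n` (`n ≥ 1`). -/
theorem indepNum_orPow {α : Type*} [Fintype α] (G : SimpleGraph α) (n : ℕ) (hn : 1 ≤ n)
    (a : ℕ)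
    (ha : IsGreatest {m : ℕ | ∃ s : Finset α, IsIndepSetOf G ↑s ∧ s.card = m} a) :
    IsGreatest {m : ℕ | ∃ s : Finset (Fin n → α), IsIndepSetOf (orPow G n) ↑s ∧ s.card = m}
      (a ^ n) := by
  classical
  obtain ⟨⟨s, hs, hscard⟩, hub⟩ := ha
  constructor
  · -- membership: the product set
    refine ⟨Fintype.piFinset (fun _ : Fin n => s), ?_, ?_⟩
    · intro x hx y hy hxy hadj
      simp only [Finset.coe_sort_coe, Fintype.coe_piFinset, Set.mem_pi, Set.mem_univ,
        forall_true_left, Finset.mem_coe] at hx hy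
      obtain ⟨j, hj, -⟩ := hadj
      by_cases h : x j = y j
      · rw [h] at hj; exact G.irrefl hj
      · exact hs (x j) (hx j) (y j) (hy j) h hj
    · rw [Fintype.card_piFinset]
      simp [hscard]
  · rintro m ⟨T, hT, rfl⟩
    exact indep_card_le G a (fun t ht => hub ⟨t, ht, rfl⟩) n T hT
end
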